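/- arXiv:1905.12161 — 4 statements merged into one kernel-verified Lean document; each statement's English description precedes it below -/
import Mathlib

section
/- Let G be a finite multigraph and c ≥ 2 an integer. Among all spanning subgraphs of G obtained by partitioning V(G) into c parts and keeping exactly the edges joining different parts, choose one, H, with the maximum number of edges. Then for every vertex subset X of V(G), the number of edges of H with exactly one end in X is at least ((c-1)/c) times the number of edges of G with exactly one end in X. -/
/-! Adding a constant `k ∈ ℤ/c` to the colours of the vertices of `X` leaves the colouring of
the edges not crossing `X` unchanged, while over the `c` choices of `k` a crossing edge becomes
bichromatic exactly `c - 1` times. By maximality of `f` no such recolouring gains bichromatic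
crossing edges, so summing over `k` gives `(c - 1) d_G(X) ≤ c d_H(X)`. -/

open Finset

namespace Paper

variable {V : Type*} [Fintype V] [DecidableEq V]

/-- Bool test: the edge `e` has exactly one end in `X`. -/
def crossB (X : Finset V) : Sym2 V → Bool :=
  Sym2.lift ⟨fun a b => xor (decide (a ∈ X)) (decide (b ∈ X)), by
    intro a b; simp [Bool.xor_comm]⟩

/-- Bool test: both ends of the edge `e` lie in `X`. -/
def bothB (X : Finset V) : Sym2 V → Bool :=
  Sym2.lift ⟨fun a b => decide (a ∈ X) && decide (b ∈ X), by
    intro a b; simp [Bool.and_comm]⟩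

/-- A finite multigraph on vertex set `V`: a multiset of loopless edges. -/
structure MGraph (V : Type*) where
  edges : Multiset (Sym2 V)
  loopless : ∀ e ∈ edges, ¬ e.IsDiag

/-- Number of edges of the edge multiset `E` with exactly one end in `X`. -/
def cutE (E : Multiset (Sym2 V)) (X : Finset V) : ℕ :=
  (E.filter (fun e => crossB X e = true)).card

/-- `d_G(X)`: number of edges of `G` with exactly one end in `X`. -/
def cut (G : MGraph V) (X : Finset V) : ℕ := cutE G.edges X

/-- Degree of a vertex in a multigraph. -/
def deg (G : MGraph V) (v : V) : ℕ := cut G {v}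

/-- Number of edges of `E` with both ends in `S`. -/
def insideE (E : Multiset (Sym2 V)) (S : Finset V) : ℕ :=
  (E.filter (fun e => bothB S e = true)).card

/-- `P` is a partition of the vertex set `W` into nonempty parts. -/
def IsPartitionOf (W : Finset V) (P : Finset (Finset V)) : Prop :=
  (∀ A ∈ P, A.Nonempty) ∧ (∀ A ∈ P, ∀ B ∈ P, A ≠ B → Disjoint A B) ∧ P.sup id = W

/-- Number of edges of `E` joining different parts of `P`. -/
def ePart (E : Multiset (Sym2 V)) (P : Finset (Finset V)) : ℕ :=
  (E.filter (fun e => decide (∀ A ∈ P, bothB A e = false) = true)).card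

/-- The edge multiset `E`, restricted to the vertex set `W`, is `l`-partition-connected:
for every partition `P` of `W`, the number of edges (inside `W`) joining different parts
is at least `Σ_{A∈P} l(A) − l(W)`. -/
def LPCOn (E : Multiset (Sym2 V)) (W : Finset V) (l : Finset V → ℝ) : Prop :=
  ∀ P : Finset (Finset V), IsPartitionOf W P →
    (ePart (E.filter (fun e => bothB W e = true)) P : ℝ) ≥ (∑ A ∈ P, l A) - l W

/-- The multigraph `G` is `l`-partition-connected. -/
def LPC (G : MGraph V) (l : Finset V → ℝ) : Prop := LPCOn G.edges Finset.univ l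

/-- `t`-partition-connectivity (constant function `t`). -/
def PC (G : MGraph V) (t : ℝ) : Prop := LPC G (fun _ => t)

/-- `m`-tree-connectivity, via the Nash-Williams–Tutte theorem identified with
`m`-partition-connectivity. -/
def TreeConn (m : ℕ) (G : MGraph V) : Prop := PC G (m : ℝ)

/-- `G` is properly `c`-colorable. -/
def MColorable (c : ℕ) (G : MGraph V) : Prop :=
  ∃ f : V → Fin c, ∀ a b : V, s(a, b) ∈ G.edges → f a ≠ f b

/-- `G` is bipartite. -/
def MBipartite (G : MGraph V) : Prop := MColorable 2 G

/-- `P` is the partition of `W` into the (vertex sets of the) `l`-partition-connected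
components of the graph with edge multiset `E` restricted to `W`: each part induces an
`l`-partition-connected subgraph, and every set inducing an `l`-partition-connected
subgraph lies inside one part. -/
def IsLPCComponents (E : Multiset (Sym2 V)) (W : Finset V) (l : Finset V → ℝ)
    (P : Finset (Finset V)) : Prop :=
  IsPartitionOf W P ∧ (∀ A ∈ P, LPCOn E A l) ∧
    ∀ B ⊆ W, B.Nonempty → LPCOn E B l → ∃ A ∈ P, B ⊆ A

/-- `Θ_l` computed with respect to the component partition `P` of `W`. -/
noncomputable def ThetaVal (E : Multiset (Sym2 V)) (W : Finset V) (l : Finset V → ℝ)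
    (P : Finset (Finset V)) : ℝ :=
  (∑ A ∈ P, l A) - (ePart (E.filter (fun e => bothB W e = true)) P : ℝ)

/-- Intersecting supermodular set function. -/
def IntersectingSupermodular (l : Finset V → ℝ) : Prop :=
  ∀ A B : Finset V, (A ∩ B).Nonempty → l (A ∩ B) + l (A ∪ B) ≥ l A + l B

/-- Nonincreasing set function. -/
def Nonincreasing (l : Finset V → ℝ) : Prop :=
  ∀ A B : Finset V, A.Nonempty → A ⊆ B → l A ≥ l B

/-- Edge multiset of a simple graph. -/
noncomputable def SGedges (G : SimpleGraph V) : Multiset (Sym2 V) :=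
  (Set.toFinite G.edgeSet).toFinset.val

/-- `m`-tree-connectivity of a simple graph, via partition-connectivity. -/
noncomputable def TreeConnSG (m : ℕ) (G : SimpleGraph V) : Prop :=
  LPCOn (SGedges G) Finset.univ (fun _ => (m : ℝ))

/-- Degree in a simple graph. -/
noncomputable def degSG (G : SimpleGraph V) (v : V) : ℕ := Nat.card (G.neighborSet v)

/-- `G` is `t`-tough. -/
def Tough (t : ℝ) (G : SimpleGraph V) : Prop :=
  ∀ S : Finset V,
    (Nat.card ((G.induce ((↑S : Set V)ᶜ)).ConnectedComponent) : ℝ) ≤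
      max 1 ((S.card : ℝ) / t)

/-- Bool test: the two ends of `e` receive different values under `f`. -/
def diffB {c : ℕ} (f : V → Fin c) : Sym2 V → Bool :=
  Sym2.lift ⟨fun a b => decide (f a ≠ f b), by
    intro a b; simp [ne_comm]⟩

end Paper

open Paper

theorem Multiset.sum_card_filter_eq_mul {α ι : Type*} (s : Finset ι) (p : ι → α → Prop)
    [∀ k, DecidablePred (p k)] (r : ℕ) (m : Multiset α)
    (h : ∀ a ∈ m, #{k ∈ s | p k a} = r) :
    ∑ k ∈ s, (m.filter (p k)).card = r * m.card := by
  induction m using Multiset.induction with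
  | empty => simp
  | cons a m ih =>
    simp only [← Multiset.countP_eq_card_filter, Multiset.countP_cons, Finset.sum_add_distrib,
      Finset.sum_boole] at ih ⊢
    rw [ih fun b hb => h b (Multiset.mem_cons_of_mem hb), Nat.cast_id,
      h a (Multiset.mem_cons_self a m), Multiset.card_cons]
    ring

theorem Fin.card_filter_add_ne {c : ℕ} (a b : Fin c) : #{k | a + k ≠ b} = c - 1 := by
  have : NeZero c := ⟨a.pos.ne'⟩
  simp_rw [ne_eq, ← eq_sub_iff_add_eq', ← ne_eq, Finset.filter_ne', Finset.card_erase_of_mem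
    (Finset.mem_univ _), Finset.card_univ, Fintype.card_fin]

namespace Paper

variable {V : Type*} [DecidableEq V] {c : ℕ}

def shiftOn (X : Finset V) (f : V → Fin c) (k : Fin c) : V → Fin c :=
  fun v => if v ∈ X then f v + k else f v

theorem diffB_shiftOn_of_crossB_eq_false {X : Finset V} {f : V → Fin c} (k : Fin c)
    {e : Sym2 V} (he : crossB X e = false) : diffB (shiftOn X f k) e = diffB f e := by
  induction e using Sym2.ind with
  | _ a b =>
    simp only [crossB, Sym2.lift_mk] at he
    by_cases ha : a ∈ X <;> by_cases hb : b ∈ X <;> simp_all [diffB, shiftOn]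

theorem card_filter_diffB_shiftOn_of_crossB {X : Finset V} (f : V → Fin c) {e : Sym2 V}
    (he : crossB X e = true) : #{k | diffB (shiftOn X f k) e = true} = c - 1 := by
  induction e using Sym2.ind with
  | _ a b =>
    simp only [crossB, Sym2.lift_mk] at he
    by_cases ha : a ∈ X <;> by_cases hb : b ∈ X <;>
      simp only [ha, hb, decide_true, decide_false, bne_self_eq_false, Bool.bne_false,
        Bool.bne_true, Bool.not_false, Bool.false_eq_true] at he
    · simpa [diffB, shiftOn, ha, hb] using Fin.card_filter_add_ne (f a) (f b)
    · convert Fin.card_filter_add_ne (f b) (f a) using 4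
      simp only [diffB, shiftOn, Sym2.lift_mk, ha, hb, ↓reduceIte, decide_eq_true_eq]
      exact ne_comm

theorem card_eq_cutE_add_card_filter_crossB_eq_false (E : Multiset (Sym2 V)) (X : Finset V) :
    E.card = cutE E X + (E.filter fun e => crossB X e = false).card := by
  rw [cutE, ← Multiset.card_add]
  simpa only [Bool.not_eq_true] using congrArg Multiset.card
    (Multiset.filter_add_not (fun e => crossB X e = true) E).symm

theorem filter_crossB_eq_false_filter_diffB_shiftOn (E : Multiset (Sym2 V)) (X : Finset V)
    (f : V → Fin c) (k : Fin c) :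
    ((E.filter fun e => diffB (shiftOn X f k) e = true).filter fun e => crossB X e = false) =
      (E.filter fun e => diffB f e = true).filter fun e => crossB X e = false := by
  simp only [Multiset.filter_filter]
  exact Multiset.filter_congr fun e _ =>
    and_congr_right fun he => by rw [diffB_shiftOn_of_crossB_eq_false k he]

theorem cutE_filter_diffB_shiftOn_le {E : Multiset (Sym2 V)} {f : V → Fin c}
    (hmax : ∀ g : V → Fin c,
      (E.filter fun e => diffB g e = true).card ≤ (E.filter fun e => diffB f e = true).card)
    (X : Finset V) (k : Fin c) :
    cutE (E.filter fun e => diffB (shiftOn X f k) e = true) X ≤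
      cutE (E.filter fun e => diffB f e = true) X := by
  have h := hmax (shiftOn X f k)
  rw [card_eq_cutE_add_card_filter_crossB_eq_false _ X,
    card_eq_cutE_add_card_filter_crossB_eq_false (E.filter _) X,
    filter_crossB_eq_false_filter_diffB_shiftOn] at h
  omega

theorem sum_cutE_filter_diffB_shiftOn (E : Multiset (Sym2 V)) (X : Finset V) (f : V → Fin c) :
    ∑ k, cutE (E.filter fun e => diffB (shiftOn X f k) e = true) X = (c - 1) * cutE E X := by
  simp only [cutE, Multiset.filter_comm (fun e => crossB X e = true)]
  exact Multiset.sum_card_filter_eq_mul _ _ _ _ fun e he =>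
    card_filter_diffB_shiftOn_of_crossB f (Multiset.mem_filter.1 he).2

end Paper

theorem stmt0_general {V : Type*} [DecidableEq V] (G : MGraph V) (c : ℕ)
    (f : V → Fin c)
    (hmax : ∀ g : V → Fin c,
      (G.edges.filter (fun e => diffB g e = true)).card ≤
        (G.edges.filter (fun e => diffB f e = true)).card) :
    ∀ X : Finset V,
      c * cutE (G.edges.filter (fun e => diffB f e = true)) X ≥ (c - 1) * cut G X := by
  intro X
  have h := Finset.sum_le_sum fun k (_ : k ∈ Finset.univ) => cutE_filter_diffB_shiftOn_le hmax X k
  rwa [sum_cutE_filter_diffB_shiftOn, Finset.sum_const, Finset.card_univ, Fintype.card_fin,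
    smul_eq_mul] at h

theorem stmt0 {V : Type*} [Fintype V] [DecidableEq V] (G : MGraph V) (c : ℕ) (hc : 2 ≤ c)
    (f : V → Fin c)
    (hmax : ∀ g : V → Fin c,
      (G.edges.filter (fun e => diffB g e = true)).card ≤
        (G.edges.filter (fun e => diffB f e = true)).card) :
    ∀ X : Finset V,
      c * cutE (G.edges.filter (fun e => diffB f e = true)) X ≥ (c - 1) * cut G X :=
  stmt0_general G c f hmax
end

section
/- Every finite graph G contains a bipartite spanning subgraph H such that for every vertex subset X of V(G), the number of edges of H leaving X is at least half the number of edges of G leaving X. In particular, every vertex v satisfies d_H(v) ≥ d_G(v)/2. -/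
open Finset

open Paper

/-! Colour the vertices with two colours so as to maximise the number of bichromatic edges, and
let `H` consist of the bichromatic edges of `G`. Swapping the two colours inside a set `X` turns
exactly the edges leaving `X` from bichromatic to monochromatic and back, so by maximality at
least half of the edges leaving `X` are bichromatic, i.e. lie in `H`. -/

theorem Multiset.card_filter_eq_card_filter_filter_add {α : Type*} (s : Multiset α)
    (p q : α → Prop) [DecidablePred p] [DecidablePred q] :
    (s.filter p).card = ((s.filter q).filter p).card + ((s.filter (¬ q ·)).filter p).card := by
  rw [← Multiset.card_add, ← Multiset.filter_add, Multiset.filter_add_not]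

namespace Paper

variable {V : Type*}

def Bichromatic {W : Type*} (f : V → W) (e : Sym2 V) : Prop := ¬ (e.map f).IsDiag

instance {W : Type*} [DecidableEq W] (f : V → W) : DecidablePred (Bichromatic f) :=
  fun e => inferInstanceAs (Decidable ¬ (e.map f).IsDiag)

@[simp] lemma bichromatic_mk {W : Type*} (f : V → W) (a b : V) :
    Bichromatic f s(a, b) ↔ f a ≠ f b := by
  simp [Bichromatic]

lemma bichromatic_xor_iff (f g : V → Bool) (e : Sym2 V) :
    Bichromatic (fun v => xor (g v) (f v)) e ↔ (Bichromatic g e ↔ ¬ Bichromatic f e) := by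
  induction e using Sym2.ind with
  | _ a b =>
    simp only [bichromatic_mk]
    generalize f a = x, f b = y, g a = z, g b = w
    decide +revert

lemma colorable_two_inf_comap_top (G : SimpleGraph V) (f : V → Bool) :
    (G ⊓ (⊤ : SimpleGraph Bool).comap f).Colorable 2 :=
  (SimpleGraph.Coloring.colorable (SimpleGraph.Hom.comap f ⊤)).mono_left inf_le_right

lemma sgEdges_inf_comap_top [Fintype V] {W : Type*} [DecidableEq W] (G : SimpleGraph V)
    (f : V → W) :
    SGedges (G ⊓ (⊤ : SimpleGraph W).comap f) = (SGedges G).filter (Bichromatic f) := by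
  rw [SGedges, SGedges, ← Finset.filter_val]
  congr 1
  ext e
  induction e using Sym2.ind with
  | _ a b => simp

variable [DecidableEq V]

lemma crossB_eq_true_iff (X : Finset V) (e : Sym2 V) :
    crossB X e = true ↔ Bichromatic (fun v => decide (v ∈ X)) e := by
  induction e using Sym2.ind with
  | _ a b => simp [crossB]

lemma cutE_eq_card_filter_bichromatic (E : Multiset (Sym2 V)) (X : Finset V) :
    cutE E X = (E.filter (Bichromatic fun v => decide (v ∈ X))).card := by
  simp only [cutE, crossB_eq_true_iff]

theorem exists_coloring_cutE_le_two_mul_cutE_bichromatic [Fintype V] (E : Multiset (Sym2 V)) :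
    ∃ f : V → Bool, ∀ X : Finset V, cutE E X ≤ 2 * cutE (E.filter (Bichromatic f)) X := by
  obtain ⟨f, -, hf⟩ := Finset.exists_max_image univ
    (fun f : V → Bool => (E.filter (Bichromatic f)).card) univ_nonempty
  refine ⟨f, fun X => ?_⟩
  rw [cutE_eq_card_filter_bichromatic, cutE_eq_card_filter_bichromatic, Multiset.filter_comm]
  set g : V → Bool := fun v => decide (v ∈ X)
  have h_flip := hf (fun v => xor (g v) (f v)) (mem_univ _)
  rw [Multiset.card_filter_eq_card_filter_filter_add _ _ (Bichromatic g),
    Multiset.card_filter_eq_card_filter_filter_add _ (Bichromatic f) (Bichromatic g)] at h_flip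
  have h_leaving : (E.filter (Bichromatic g)).filter (Bichromatic fun v => xor (g v) (f v))
      = (E.filter (Bichromatic g)).filter (¬ Bichromatic f ·) :=
    Multiset.filter_congr fun e he => by
      simp [bichromatic_xor_iff, (Multiset.mem_filter.1 he).2]
  have h_not_leaving :
      (E.filter (¬ Bichromatic g ·)).filter (Bichromatic fun v => xor (g v) (f v))
        = (E.filter (¬ Bichromatic g ·)).filter (Bichromatic f) :=
    Multiset.filter_congr fun e he => by
      simp [bichromatic_xor_iff, (Multiset.mem_filter.1 he).2]
  have h_split := congrArg Multiset.card
    (Multiset.filter_add_not (Bichromatic f) (E.filter (Bichromatic g)))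
  rw [Multiset.card_add] at h_split
  rw [h_leaving, h_not_leaving] at h_flip
  omega

lemma degSG_eq_cutE_singleton [Fintype V] (G : SimpleGraph V) (v : V) :
    degSG G v = cutE (SGedges G) {v} := by
  have h_incidence : (((Set.toFinite G.edgeSet).toFinset.filter (crossB {v} · = true) :
      Finset (Sym2 V)) : Set (Sym2 V)) = G.incidenceSet v := by
    ext e
    induction e using Sym2.ind with
    | _ a b =>
      simp only [crossB_eq_true_iff, Finset.coe_filter, Set.Finite.mem_toFinset,
        SimpleGraph.mem_edgeSet, bichromatic_mk, Finset.mem_singleton, SimpleGraph.incidenceSet,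
        Set.mem_ofPred_eq, Sym2.mem_iff]
      grind [G.ne_of_adj]
  rw [degSG, ← Nat.card_congr (G.incidenceSetEquivNeighborSet v), ← h_incidence,
    Nat.card_coe_set_eq, Set.ncard_coe_finset]
  rfl

end Paper

theorem stmt2 {V : Type*} [Fintype V] [DecidableEq V] (G : SimpleGraph V) :
    ∃ H : SimpleGraph V, H ≤ G ∧ H.Colorable 2 ∧
      (∀ X : Finset V, 2 * cutE (SGedges H) X ≥ cutE (SGedges G) X) ∧
      ∀ v : V, 2 * degSG H v ≥ degSG G v := by
  obtain ⟨f, hf⟩ := exists_coloring_cutE_le_two_mul_cutE_bichromatic (SGedges G)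
  refine ⟨G ⊓ (⊤ : SimpleGraph Bool).comap f, inf_le_left, colorable_two_inf_comap_top G f,
    fun X => ?_, fun v => ?_⟩
  · rw [sgEdges_inf_comap_top]
    exact hf X
  · rw [degSG_eq_cutE_singleton, degSG_eq_cutE_singleton, sgEdges_inf_comap_top]
    exact hf {v}
end

section
/- If a multigraph G is 2l-partition-connected for a set function l on subsets of V(G) with l(∅)=0, then G has a bipartite spanning subgraph H that is l-partition-connected and satisfies d_H(X) ≥ d_G(X)/2 for every vertex subset X. -/
open Finset

open Paper

/-!
Colour the vertices with two colours so that the number of bichromatic edges is maximal (a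
maximum cut) and let `H` consist of the bichromatic edges. Swapping the two colours on a set `X`
changes the status of exactly the edges leaving `X`, so by maximality at least half of them are
bichromatic: `d_H(X) ≥ d_G(X) / 2`. Summing over the parts of a partition `P` counts every edge
between parts twice, hence `e_H(P) ≥ e_G(P) / 2 ≥ Σ_{A ∈ P} l(A) − l(V)`.
-/

theorem Multiset.card_filter_eq_sum_map_ite {α : Type*} (p : α → Prop) [DecidablePred p]
    (E : Multiset α) : (E.filter p).card = (E.map fun e => if p e then 1 else 0).sum := by
  induction E using Multiset.induction_on with
  | empty => simp
  | cons e E ih => by_cases h : p e <;> simp [h, ih, add_comm]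

namespace Paper

variable {V : Type*}

@[simp]
theorem diffB_mk {c : ℕ} (f : V → Fin c) (a b : V) : diffB f s(a, b) = decide (f a ≠ f b) :=
  rfl

variable [DecidableEq V]

@[simp]
theorem crossB_mk (X : Finset V) (a b : V) :
    crossB X s(a, b) = xor (decide (a ∈ X)) (decide (b ∈ X)) := rfl

@[simp]
theorem bothB_mk (X : Finset V) (a b : V) :
    bothB X s(a, b) = (decide (a ∈ X) && decide (b ∈ X)) := rfl

def bichromatic {c : ℕ} (f : V → Fin c) (E : Multiset (Sym2 V)) : Multiset (Sym2 V) :=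
  E.filter fun e => diffB f e = true

def flipOn (X : Finset V) (f : V → Fin 2) : V → Fin 2 :=
  fun v => if v ∈ X then f v + 1 else f v

theorem diffB_flipOn (X : Finset V) (f : V → Fin 2) (e : Sym2 V) :
    diffB (flipOn X f) e = xor (crossB X e) (diffB f e) := by
  have add_one_eq_iff : ∀ x y : Fin 2, x + 1 = y ↔ x ≠ y := by decide
  have eq_add_one_iff : ∀ x y : Fin 2, x = y + 1 ↔ x ≠ y := by decide
  induction e using Sym2.ind with
  | _ a b =>
    by_cases ha : a ∈ X <;> by_cases hb : b ∈ X <;>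
      simp [flipOn, ha, hb, add_one_eq_iff, eq_add_one_iff]

theorem cutE_add_card_bichromatic (E : Multiset (Sym2 V)) (X : Finset V) (f : V → Fin 2) :
    cutE E X + (bichromatic f E).card =
      2 * cutE (bichromatic f E) X + (bichromatic (flipOn X f) E).card := by
  have edge (c d : Bool) : ((if c = true then 1 else 0) + if d = true then 1 else 0) =
      2 * (if (c && d) = true then 1 else 0) + if xor c d = true then 1 else 0 := by
    cases c <;> cases d <;> rfl
  simp only [cutE, bichromatic, Multiset.filter_filter, ← Bool.and_eq_true, diffB_flipOn,
    Multiset.card_filter_eq_sum_map_ite, ← Multiset.sum_map_add, ← Multiset.sum_map_mul_left,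
    edge]

theorem cutE_le_two_mul_cutE_bichromatic {E : Multiset (Sym2 V)} {f : V → Fin 2}
    (hf : ∀ g : V → Fin 2, (bichromatic g E).card ≤ (bichromatic f E).card) (X : Finset V) :
    cutE E X ≤ 2 * cutE (bichromatic f E) X := by
  have := cutE_add_card_bichromatic E X f
  have := hf (flipOn X f)
  omega

section Partition

variable [Fintype V]

theorem IsPartitionOf.sum_ite_mem {P : Finset (Finset V)} (hP : IsPartitionOf univ P) (v : V) :
    ∑ A ∈ P, (if v ∈ A then 1 else 0) = 1 := by
  obtain ⟨-, hdisj, hsup⟩ := hP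
  obtain ⟨A, hA, hvA⟩ : ∃ A ∈ P, v ∈ A := by
    simpa using Finset.mem_sup.mp (hsup ▸ Finset.mem_univ v)
  rw [Finset.sum_eq_single_of_mem A hA fun B hB hBA => if_neg fun hvB =>
    Finset.disjoint_left.mp (hdisj B hB A hA hBA) hvB hvA, if_pos hvA]

theorem IsPartitionOf.sum_ite_crossB {P : Finset (Finset V)} (hP : IsPartitionOf univ P)
    (e : Sym2 V) :
    ∑ A ∈ P, (if crossB A e = true then 1 else 0) =
      2 * if ∀ A ∈ P, bothB A e = false then 1 else 0 := by
  induction e using Sym2.ind with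
  | _ a b =>
    -- A part containing `k` ends of the edge is crossed iff `k = 1`.
    have ends : ∑ A ∈ P, ((if crossB A s(a, b) = true then 1 else 0) +
          2 * if bothB A s(a, b) = true then 1 else 0) =
        ∑ A ∈ P, ((if a ∈ A then 1 else 0) + if b ∈ A then 1 else 0) :=
      Finset.sum_congr rfl fun A _ => by
        by_cases ha : a ∈ A <;> by_cases hb : b ∈ A <;> simp [ha, hb]
    rw [Finset.sum_add_distrib, Finset.sum_add_distrib, ← Finset.mul_sum, hP.sum_ite_mem a,
      hP.sum_ite_mem b] at ends
    split_ifs with h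
    · have : ∑ A ∈ P, (if bothB A s(a, b) = true then 1 else 0) = 0 :=
        Finset.sum_eq_zero fun A hA => by simp [h A hA]
      omega
    · push Not at h
      obtain ⟨A, hA, hboth⟩ := h
      have : 1 ≤ ∑ A ∈ P, (if bothB A s(a, b) = true then 1 else 0) :=
        (Finset.single_le_sum (fun _ _ => Nat.zero_le _) hA).trans' (by simp [hboth])
      omega

theorem IsPartitionOf.sum_cutE {P : Finset (Finset V)} (hP : IsPartitionOf univ P)
    (E : Multiset (Sym2 V)) : ∑ A ∈ P, cutE E A = 2 * ePart E P := by
  simp only [cutE, ePart, Multiset.card_filter_eq_sum_map_ite, decide_eq_true_eq,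
    Finset.sum_eq_multiset_sum, Multiset.sum_map_sum_map (m := P.val)]
  simp only [← Finset.sum_eq_multiset_sum, hP.sum_ite_crossB, Multiset.sum_map_mul_left]

theorem filter_bothB_univ (E : Multiset (Sym2 V)) :
    E.filter (fun e => bothB univ e = true) = E :=
  Multiset.filter_eq_self.mpr fun e _ => by induction e using Sym2.ind; simp

theorem LPCOn.univ_of_cutE_le_two_mul {E F : Multiset (Sym2 V)} {l : Finset V → ℝ}
    (hE : LPCOn E univ fun A => 2 * l A) (hEF : ∀ X, cutE E X ≤ 2 * cutE F X) :
    LPCOn F univ l := by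
  intro P hP
  have hcut : 2 * ePart E P ≤ 2 * (2 * ePart F P) := by
    rw [← hP.sum_cutE, ← hP.sum_cutE, Finset.mul_sum]
    exact Finset.sum_le_sum fun A _ => hEF A
  have hcut' : (ePart E P : ℝ) ≤ 2 * ePart F P := by
    exact_mod_cast Nat.le_of_mul_le_mul_left hcut two_pos
  have hbound := hE P hP
  rw [filter_bothB_univ, ← Finset.mul_sum] at hbound
  rw [filter_bothB_univ]
  linarith

end Partition

end Paper

theorem stmt4_general {V : Type*} [Fintype V] [DecidableEq V] (G : MGraph V)
    (l : Finset V → ℝ)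
    (hpc : LPC G (fun A => 2 * l A)) :
    ∃ H : MGraph V, H.edges ≤ G.edges ∧ MBipartite H ∧ LPC H l ∧
      ∀ X : Finset V, 2 * cut H X ≥ cut G X := by
  obtain ⟨f, hf⟩ := Finite.exists_max fun g : V → Fin 2 => (bichromatic g G.edges).card
  have hcut := cutE_le_two_mul_cutE_bichromatic hf
  refine ⟨⟨bichromatic f G.edges, fun e he => G.loopless e (Multiset.mem_of_mem_filter he)⟩,
    Multiset.filter_le _ _, ⟨f, fun a b hab => ?_⟩, hpc.univ_of_cutE_le_two_mul hcut, hcut⟩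
  simpa using (Multiset.mem_filter.mp hab).2

theorem stmt4 {V : Type*} [Fintype V] [DecidableEq V] (G : MGraph V)
    (l : Finset V → ℝ) (hl0 : l ∅ = 0)
    (hpc : LPC G (fun A => 2 * l A)) :
    ∃ H : MGraph V, H.edges ≤ G.edges ∧ MBipartite H ∧ LPC H l ∧
      ∀ X : Finset V, 2 * cut H X ≥ cut G X :=
  stmt4_general G l hpc
end

section
/- If G is a complete graph on n vertices with 3k ≤ n, and n < 8k − 4, then G admits a bipartite connected spanning subgraph whose vertex degrees all lie in {k, 2k, 3k, 4k}. -/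
open Finset

open Paper

/-! Split the vertices into five levels of sizes `a, k, b, k, a` with `2a + b + 2k = n` and
`b > 0` (the outer levels may be empty, the middle one may not), and join each pair of
consecutive levels completely. The result is bipartite (colour by the parity of the level) and
connected, and a vertex of level `i` has degree the total size of levels `i ± 1`, namely
`k, a + b, 2k, a + b, k`. Taking `a + b = k, 2k, 3k` according as `n < 4k, 6k, 8k` puts all
degrees in `{k, 2k, 3k, 4k}`. -/

theorem exists_card_fiber_eq {V ι : Type*} [Fintype V] [DecidableEq ι] (I : Finset ι)
    (s : ι → ℕ) (hs : ∀ i ∉ I, s i = 0) (hsum : ∑ i ∈ I, s i = Fintype.card V) :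
    ∃ g : V → ι, ∀ i, #{v | g v = i} = s i := by
  let e : V ≃ Σ i : I, Fin (s i) :=
    Fintype.equivOfCardEq (by simp [Fintype.card_sigma, Finset.sum_attach I s, hsum])
  refine ⟨fun v => (e v).1, fun i => ?_⟩
  have hfiber : #{v | ((e v).1 : ι) = i} = #{x : Σ i : I, Fin (s i) | (x.1 : ι) = i} := by
    rw [← Fintype.card_subtype, ← Fintype.card_subtype]
    exact Fintype.card_congr (e.subtypeEquiv fun _ => Iff.rfl)
  have hsigma : ({x : Σ i : I, Fin (s i) | (x.1 : ι) = i} : Finset _) =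
      ({j : I | (j : ι) = i} : Finset I).sigma fun _ => univ := by
    ext x; simp
  rw [hfiber, hsigma, card_sigma]
  simp only [card_univ, Fintype.card_fin]
  rw [sum_filter, sum_coe_sort I (fun j => if j = i then s j else 0), sum_ite_eq']
  split_ifs with hi
  · rfl
  · exact (hs i hi).symm

namespace SimpleGraph

variable {V : Type*}

@[simps]
def levelGraph (g : V → ℤ) : SimpleGraph V where
  Adj u v := g v = g u + 1 ∨ g u = g v + 1
  symm := ⟨fun _ _ => Or.symm⟩
  loopless := ⟨fun _ => by omega⟩

theorem levelGraph_colorable_two (g : V → ℤ) : (levelGraph g).Colorable 2 := by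
  refine (Coloring.mk (fun v => (g v : ZMod 2)) ?_).colorable
  rintro u v (h | h) <;> simp [h]

theorem degSG_levelGraph [Fintype V] (g : V → ℤ) (v : V) :
    degSG (levelGraph g) v = #{u | g u = g v + 1} + #{u | g u = g v - 1} := by
  classical
  have hset : (levelGraph g).neighborSet v =
      ↑(({u | g u = g v + 1} : Finset V) ∪ ({u | g u = g v - 1} : Finset V)) := by
    ext u; simp; omega
  rw [degSG, hset, Nat.card_coe_set_eq, Set.ncard_coe_finset, card_union_of_disjoint]
  exact disjoint_filter.2 fun u _ h => by omega

theorem levelGraph_reachable_of_lt {g : V → ℤ} (hg : (Set.range g).OrdConnected) {u v : V}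
    (huv : g u < g v) : (levelGraph g).Reachable u v := by
  obtain ⟨n, hn⟩ : ∃ n : ℕ, g v = g u + n + 1 := ⟨(g v - g u - 1).toNat, by omega⟩
  induction n generalizing v with
  | zero => exact Adj.reachable (Or.inl (by simpa using hn))
  | succ n ih =>
    obtain ⟨w, hw⟩ : g u + n + 1 ∈ Set.range g :=
      hg.out ⟨u, rfl⟩ ⟨v, rfl⟩ ⟨by omega, by omega⟩
    exact (ih (by omega) hw).trans (Adj.reachable (Or.inl (by push_cast at hn; omega)))

theorem levelGraph_connected {g : V → ℤ} (hg : (Set.range g).OrdConnected)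
    (hg' : (Set.range g).Nontrivial) : (levelGraph g).Connected := by
  have hne : ∀ {u v}, g u ≠ g v → (levelGraph g).Reachable u v := fun huv =>
    huv.lt_or_gt.elim (levelGraph_reachable_of_lt hg)
      fun h => (levelGraph_reachable_of_lt hg h).symm
  obtain ⟨_, ⟨u₀, rfl⟩⟩ := hg'.nonempty
  refine (connected_iff _).2 ⟨fun u v => ?_, ⟨u₀⟩⟩
  obtain ⟨_, ⟨w, rfl⟩, hw⟩ := hg'.exists_ne (g u)
  by_cases huv : g u = g v
  · exact (hne hw.symm).trans (hne (huv ▸ hw))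
  · exact hne huv

end SimpleGraph

open SimpleGraph in
theorem exists_connected_colorable_two_degree_mem {V : Type*} [Fintype V] (k a b : ℕ)
    (hk : 0 < k) (hb : 0 < b) (hcard : 2 * a + b + 2 * k = Fintype.card V) :
    ∃ H : SimpleGraph V, H.Colorable 2 ∧ H.Connected ∧
      ∀ v, degSG H v ∈ ({k, a + b, 2 * k} : Set ℕ) := by
  let s : ℤ → ℕ := fun j =>
    if j = 0 ∨ j = 4 then a else if j = 1 ∨ j = 3 then k else if j = 2 then b else 0
  have hs : ∀ j, s j ≠ 0 ↔ 1 ≤ j ∧ j ≤ 3 ∨ a ≠ 0 ∧ 0 ≤ j ∧ j ≤ 4 := by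
    intro j; simp only [s]; split_ifs <;> omega
  have hsupp : ∀ j ∉ ({0, 1, 2, 3, 4} : Finset ℤ), s j = 0 := fun j hj => by
    by_contra h
    have := (hs j).1 h
    simp only [mem_insert, mem_singleton] at hj
    omega
  obtain ⟨g, hg⟩ := exists_card_fiber_eq (V := V) _ s hsupp (by simp [s]; omega)
  have hrange : Set.range g = {j | s j ≠ 0} := by
    ext j; simp [← hg]
  refine ⟨levelGraph g, levelGraph_colorable_two g, levelGraph_connected ?_ ?_, fun v => ?_⟩
  · rw [hrange]
    refine ⟨fun x hx y hy z ⟨hxz, hzy⟩ => (hs z).2 ?_⟩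
    have := (hs x).1 hx
    have := (hs y).1 hy
    omega
  · rw [hrange]; exact ⟨1, by simp [hs], 2, by simp [hs], by norm_num⟩
  · have hv : s (g v) ≠ 0 := by rw [← hg]; exact card_ne_zero.2 ⟨v, by simp⟩
    rw [degSG_levelGraph, hg, hg]
    rw [hs] at hv
    obtain h | h | h | h | h : g v = 0 ∨ g v = 1 ∨ g v = 2 ∨ g v = 3 ∨ g v = 4 := by omega
    all_goals simp [s, h] <;> omega

theorem stmt19_general {V : Type*} [Fintype V] (k : ℕ) (hk : 0 < k)
    (hn1 : 3 * k ≤ Fintype.card V) (hn2 : Fintype.card V < 8 * k - 4) :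
    ∃ H : SimpleGraph V, H ≤ (⊤ : SimpleGraph V) ∧ H.Colorable 2 ∧ H.Connected ∧
      ∀ v : V, degSG H v ∈ ({k, 2 * k, 3 * k, 4 * k} : Set ℕ) := by
  obtain ⟨a, b, hb, hcard, hab⟩ : ∃ a b, 0 < b ∧ 2 * a + b + 2 * k = Fintype.card V ∧
      (a + b = k ∨ a + b = 2 * k ∨ a + b = 3 * k) := by
    by_cases h4 : Fintype.card V < 4 * k
    · exact ⟨Fintype.card V - 3 * k, 4 * k - Fintype.card V, by omega, by omega, by omega⟩
    by_cases h6 : Fintype.card V < 6 * k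
    · exact ⟨Fintype.card V - 4 * k, 6 * k - Fintype.card V, by omega, by omega, by omega⟩
    · exact ⟨Fintype.card V - 5 * k, 8 * k - Fintype.card V, by omega, by omega, by omega⟩
  obtain ⟨H, hcol, hconn, hdeg⟩ := exists_connected_colorable_two_degree_mem k a b hk hb hcard
  refine ⟨H, le_top, hcol, hconn, fun v => ?_⟩
  have hv := hdeg v
  simp only [Set.mem_insert_iff, Set.mem_singleton_iff] at hv ⊢
  omega

theorem stmt19 {V : Type*} [Fintype V] [DecidableEq V] (k : ℕ) (hk : 0 < k)
    (hn1 : 3 * k ≤ Fintype.card V) (hn2 : Fintype.card V < 8 * k - 4) :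
    ∃ H : SimpleGraph V, H ≤ (⊤ : SimpleGraph V) ∧ H.Colorable 2 ∧ H.Connected ∧
      ∀ v : V, degSG H v ∈ ({k, 2 * k, 3 * k, 4 * k} : Set ℕ) :=
  stmt19_general k hk hn1 hn2
end
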